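/- arXiv:2401.07455 — 3 statements merged into one kernel-verified Lean document; each statement's English description precedes it below -/
import Mathlib

section
/- In the equilibrium profile s^e: the departure times are strictly increasing (s^e_1 < s^e_2 < … < s^e_P), the destination arrival times satisfy d_k = t⁻ + (k−1)·m/μ for every k ∈ {1,…,P} (in particular d_1 = s^e_1 = t⁻ and d_P = t⁺), and every user's trip cost equals ρ, i.e. C_k = ρ for all k ∈ {1,…,P}. -/
/-- Schedule delay cost function `V(d) = β·max(−d,0) + γ·max(d,0)`. -/
noncomputable def sdc (β γ d : ℝ) : ℝ := β * max (-d) 0 + γ * max d 0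

/-- Destination arrival times: `d 0 = s 0`, `d (k+1) = max (d k + m/μ) (s (k+1))`. -/
noncomputable def arr (m μ : ℝ) (s : ℕ → ℝ) : ℕ → ℝ
  | 0 => s 0
  | k + 1 => max (arr m μ s k + m / μ) (s (k + 1))

/-- Trip cost of the `k`-th departing user. -/
noncomputable def cost (β γ m μ : ℝ) (s : ℕ → ℝ) (k : ℕ) : ℝ :=
  (arr m μ s k - s k) + sdc β γ (arr m μ s k)

/-- A time profile: strictly increasing departure times (0-indexed, users `0,…,P-1`). -/
def IsProfile (P : ℕ) (s : ℕ → ℝ) : Prop := ∀ i, i + 1 < P → s i < s (i + 1)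

/-- Equilibrium departure time of the first user. -/
noncomputable def tminus (P : ℕ) (m μ β γ : ℝ) : ℝ :=
  -(m * ((P : ℝ) - 1) / μ) * (γ / (β + γ))

/-- Equilibrium departure time of the last user. -/
noncomputable def tplus (P : ℕ) (m μ β γ : ℝ) : ℝ :=
  tminus P m μ β γ + m * ((P : ℝ) - 1) / μ

/-- Equilibrium trip cost. -/
noncomputable def rho (P : ℕ) (m μ β γ : ℝ) : ℝ :=
  (m * ((P : ℝ) - 1) / μ) * (β * γ / (β + γ))

/-- The equilibrium profile `s^e` (0-indexed: index `k` is the `(k+1)`-st departing user). -/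
noncomputable def se (P : ℕ) (m μ β γ : ℝ) (k : ℕ) : ℝ :=
  if (k : ℤ) ≤ ⌊γ * ((P : ℝ) - 1) / (β + γ)⌋ then
    tminus P m μ β γ + (m * (1 - β) / μ) * (k : ℝ)
  else
    tminus P m μ β γ + (m * (1 + γ) / μ) * (k : ℝ) - m * γ * ((P : ℝ) - 1) / μ
/-!
Write `T = m/μ` and `x = γ(P-1)/(β+γ)`, so that `t⁻ = -T x`. In closed form the `k`-th user of
`s^e` departs `T · min(βk, γ(P-1-k))` before `t⁻ + kT`, the early branch of the minimum being
exactly the users with `k ≤ x`. These departures never outrun the bottleneck, so the queue never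
empties and user `k` arrives at `t⁻ + kT`. Early users wait `Tβk` and arrive `T(x-k)` early; late
users wait `Tγ(P-1-k)` and arrive `T(k-x)` late; both costs sum to `Tβx = Tγ(P-1-x) = ρ`.
-/

theorem sdc_of_nonpos (β γ : ℝ) {d : ℝ} (hd : d ≤ 0) : sdc β γ d = -(β * d) := by
  rw [sdc, max_eq_left (neg_nonneg.mpr hd), max_eq_right hd]
  ring

theorem sdc_of_nonneg (β γ : ℝ) {d : ℝ} (hd : 0 ≤ d) : sdc β γ d = γ * d := by
  rw [sdc, max_eq_right (neg_nonpos.mpr hd), max_eq_left hd]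
  ring

theorem arr_eq_of_le {m μ : ℝ} {s : ℕ → ℝ} {n : ℕ}
    (hs : ∀ k < n, s k ≤ s 0 + k * (m / μ)) :
    ∀ k < n, arr m μ s k = s 0 + k * (m / μ) := by
  intro k hk
  induction k with
  | zero => simp [arr]
  | succ k ih =>
    have hsk := hs (k + 1) hk
    push_cast at hsk ⊢
    rw [arr, ih (by omega), max_eq_left (by linarith)]
    ring

section Equilibrium

variable {P : ℕ} {m μ β γ : ℝ}

theorem se_eq_min (hβγ : 0 < β + γ) (k : ℕ) :
    se P m μ β γ k =
      tminus P m μ β γ + m / μ * (k - min (β * k) (γ * (P - 1 - k))) := by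
  have hcrit : (k : ℝ) ≤ γ * (P - 1) / (β + γ) ↔ β * k ≤ γ * (P - 1 - k) := by
    rw [le_div_iff₀ hβγ]
    constructor <;> intro h <;> linarith
  simp only [se, Int.le_floor, Int.cast_natCast, hcrit]
  split_ifs with h
  · rw [min_eq_left h]
    ring
  · rw [min_eq_right (not_le.mp h).le]
    ring

theorem tminus_add_mul_eq (hβγ : 0 < β + γ) (k : ℝ) :
    tminus P m μ β γ + k * (m / μ) = m / μ * (β * k - γ * (P - 1 - k)) / (β + γ) := by
  unfold tminus
  field_simp
  ring

theorem se_zero (hP : 1 ≤ P) (hβγ : 0 < β + γ) (hγ : 0 ≤ γ) :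
    se P m μ β γ 0 = tminus P m μ β γ := by
  have hP' : (1 : ℝ) ≤ P := by exact_mod_cast hP
  rw [se_eq_min hβγ, Nat.cast_zero, mul_zero, min_eq_left (by nlinarith)]
  ring

/-- `k - min (βk) (γ(P-1-k))` grows by more than `1 - β > 0` per step, as the minimum grows by at
most `β`. -/
theorem se_strictMono (hm : 0 < m) (hμ : 0 < μ) (hβ : 0 < β) (hβ1 : β < 1) (hγ : 0 < γ) :
    StrictMono (se P m μ β γ) := by
  have hβγ : 0 < β + γ := by linarith
  refine strictMono_nat_of_lt_succ fun k => ?_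
  rw [se_eq_min hβγ, se_eq_min hβγ]
  push_cast
  have hstep :
      min (β * (k + 1)) (γ * (P - 1 - (k + 1))) < min (β * k) (γ * (P - 1 - k)) + 1 := by
    rcases min_cases (β * k) (γ * (P - 1 - k)) with ⟨h, -⟩ | ⟨h, -⟩ <;> rw [h]
    · exact (min_le_left _ _).trans_lt (by linarith)
    · exact (min_le_right _ _).trans_lt (by linarith)
  have hT : 0 < m / μ := div_pos hm hμ
  nlinarith

theorem arr_se (hP : 1 ≤ P) (hm : 0 < m) (hμ : 0 < μ) (hβ : 0 < β) (hγ : 0 < γ) {k : ℕ}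
    (hk : k < P) :
    arr m μ (se P m μ β γ) k = tminus P m μ β γ + k * (m / μ) := by
  have hβγ : 0 < β + γ := by linarith
  rw [← se_zero hP hβγ hγ.le]
  refine arr_eq_of_le (fun j hj => ?_) k hk
  have hj' : (j : ℝ) + 1 ≤ P := by exact_mod_cast hj
  have hwait : 0 ≤ min (β * j) (γ * (P - 1 - j)) := le_min (by positivity) (by nlinarith)
  rw [se_eq_min hβγ, se_zero hP hβγ hγ.le]
  have hT : 0 < m / μ := div_pos hm hμ
  nlinarith

theorem cost_se (hP : 1 ≤ P) (hm : 0 < m) (hμ : 0 < μ) (hβ : 0 < β) (hγ : 0 < γ) {k : ℕ}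
    (hk : k < P) : cost β γ m μ (se P m μ β γ) k = rho P m μ β γ := by
  have hβγ : 0 < β + γ := by linarith
  have hT : 0 < m / μ := div_pos hm hμ
  have hd := tminus_add_mul_eq (P := P) (m := m) (μ := μ) hβγ k
  rw [cost, arr_se hP hm hμ hβ hγ hk, se_eq_min hβγ]
  rcases le_total (β * k) (γ * (P - 1 - k)) with h | h
  · have hearly : tminus P m μ β γ + k * (m / μ) ≤ 0 := by
      rw [hd]
      exact div_nonpos_of_nonpos_of_nonneg
        (mul_nonpos_of_nonneg_of_nonpos hT.le (by linarith)) hβγ.le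
    rw [sdc_of_nonpos β γ hearly, min_eq_left h, hd, rho, tminus]
    field_simp
    ring
  · have hlate : 0 ≤ tminus P m μ β γ + k * (m / μ) := by
      rw [hd]
      exact div_nonneg (mul_nonneg hT.le (by linarith)) hβγ.le
    rw [sdc_of_nonneg β γ hlate, min_eq_right h, hd, rho, tminus]
    field_simp
    ring

end Equilibrium

theorem equilibrium_profile_properties_general (P : ℕ) (hP : 2 ≤ P) (m μ β γ : ℝ)
    (hm : 0 < m) (hμ : 0 < μ)
    (hβ : 0 < β) (hβ1 : β < 1) (hγ : 0 < γ) :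
    (∀ i, i + 1 < P → se P m μ β γ i < se P m μ β γ (i + 1)) ∧
    (∀ k, k < P →
      arr m μ (se P m μ β γ) k = tminus P m μ β γ + (k : ℝ) * (m / μ)) ∧
    arr m μ (se P m μ β γ) 0 = se P m μ β γ 0 ∧
    se P m μ β γ 0 = tminus P m μ β γ ∧
    arr m μ (se P m μ β γ) (P - 1) = tplus P m μ β γ ∧
    (∀ k, k < P → cost β γ m μ (se P m μ β γ) k = rho P m μ β γ) := by
  have hP1 : 1 ≤ P := by omega
  have hlast : arr m μ (se P m μ β γ) (P - 1) = tplus P m μ β γ := by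
    rw [arr_se hP1 hm hμ hβ hγ (Nat.sub_lt hP1 one_pos), Nat.cast_sub hP1, tplus]
    push_cast
    ring
  exact ⟨fun i _ => se_strictMono hm hμ hβ hβ1 hγ i.lt_succ_self,
    fun k hk => arr_se hP1 hm hμ hβ hγ hk, rfl, se_zero hP1 (by linarith) hγ.le, hlast,
    fun k hk => cost_se hP1 hm hμ hβ hγ hk⟩

theorem equilibrium_profile_properties (P : ℕ) (hP : 2 ≤ P) (m μ β γ : ℝ)
    (hm : 0 < m) (hm1 : m ≤ 1) (hμ : 0 < μ)
    (hβ : 0 < β) (hβ1 : β < 1) (hγ : 0 < γ) :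
    (∀ i, i + 1 < P → se P m μ β γ i < se P m μ β γ (i + 1)) ∧
    (∀ k, k < P →
      arr m μ (se P m μ β γ) k = tminus P m μ β γ + (k : ℝ) * (m / μ)) ∧
    arr m μ (se P m μ β γ) 0 = se P m μ β γ 0 ∧
    se P m μ β γ 0 = tminus P m μ β γ ∧
    arr m μ (se P m μ β γ) (P - 1) = tplus P m μ β γ ∧
    (∀ k, k < P → cost β γ m μ (se P m μ β γ) k = rho P m μ β γ) :=
  equilibrium_profile_properties_general P hP m μ β γ hm hμ hβ hβ1 hγ
end

section
/- For every time profile s: if t⁻ ≤ s_1, then the trip cost of the last departing user satisfies C_P ≥ ρ; and if t⁻ < s_1, then C_P > ρ. -/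
/-!
Consecutive arrivals at the destination are at least `m/μ` apart, so the last arrival time `d`
satisfies `d ≥ s₁ + m(P-1)/μ`, which is at least `t⁺` when `t⁻ ≤ s₁`. Since `V(d) ≥ γ·d`, the
schedule delay alone then costs at least `γ·t⁺`, and `γ·t⁺ = ρ`.
-/

theorem self_le_arr (m μ : ℝ) (s : ℕ → ℝ) (k : ℕ) : s k ≤ arr m μ s k := by
  cases k with
  | zero => exact le_rfl
  | succ k => exact le_max_right _ _

theorem add_mul_le_arr (m μ : ℝ) (s : ℕ → ℝ) (k : ℕ) :
    s 0 + k * (m / μ) ≤ arr m μ s k := by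
  induction k with
  | zero => simp [arr]
  | succ k ih =>
    calc s 0 + ((k + 1 : ℕ) : ℝ) * (m / μ) = s 0 + k * (m / μ) + m / μ := by push_cast; ring
      _ ≤ arr m μ s k + m / μ := by linarith
      _ ≤ arr m μ s (k + 1) := le_max_left _ _

theorem add_span_le_arr_pred {P : ℕ} (hP : 1 ≤ P) (m μ : ℝ) (s : ℕ → ℝ) :
    s 0 + m * ((P : ℝ) - 1) / μ ≤ arr m μ s (P - 1) := by
  have h := add_mul_le_arr m μ s (P - 1)
  rw [Nat.cast_sub hP, Nat.cast_one] at h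
  linarith [show m * ((P : ℝ) - 1) / μ = ((P : ℝ) - 1) * (m / μ) by ring]

theorem mul_le_sdc {β γ : ℝ} (hβ : 0 ≤ β) (hγ : 0 ≤ γ) (d : ℝ) : γ * d ≤ sdc β γ d := by
  unfold sdc
  nlinarith [le_max_left d 0, le_max_right (-d) 0, mul_nonneg hβ (le_max_right (-d) 0)]

theorem mul_arr_le_cost {β γ : ℝ} (hβ : 0 ≤ β) (hγ : 0 ≤ γ) (m μ : ℝ) (s : ℕ → ℝ) (k : ℕ) :
    γ * arr m μ s k ≤ cost β γ m μ s k := by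
  unfold cost
  linarith [self_le_arr m μ s k, mul_le_sdc hβ hγ (arr m μ s k)]

theorem rho_eq_mul_tplus (P : ℕ) (m μ : ℝ) {β γ : ℝ} (hβγ : β + γ ≠ 0) :
    rho P m μ β γ = γ * tplus P m μ β γ := by
  unfold rho tplus tminus
  field_simp
  ring

theorem last_user_cost_bound_general (P : ℕ) (hP : 2 ≤ P) (m μ β γ : ℝ)
    (hβ : 0 < β) (hγ : 0 < γ)
    (s : ℕ → ℝ) :
    (tminus P m μ β γ ≤ s 0 → rho P m μ β γ ≤ cost β γ m μ s (P - 1)) ∧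
    (tminus P m μ β γ < s 0 → rho P m μ β γ < cost β γ m μ s (P - 1)) := by
  set d := arr m μ s (P - 1)
  have hd : s 0 + m * ((P : ℝ) - 1) / μ ≤ d := add_span_le_arr_pred (by omega) m μ s
  have hcost : γ * d ≤ cost β γ m μ s (P - 1) := mul_arr_le_cost hβ.le hγ.le m μ s (P - 1)
  rw [rho_eq_mul_tplus P m μ (by positivity), tplus]
  constructor
  · intro h
    linarith [mul_le_mul_of_nonneg_left (by linarith : tminus P m μ β γ + m * ((P : ℝ) - 1) / μ
      ≤ d) hγ.le]
  · intro h
    linarith [mul_lt_mul_of_pos_left (by linarith : tminus P m μ β γ + m * ((P : ℝ) - 1) / μ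
      < d) hγ]

theorem last_user_cost_bound (P : ℕ) (hP : 2 ≤ P) (m μ β γ : ℝ)
    (hm : 0 < m) (hm1 : m ≤ 1) (hμ : 0 < μ)
    (hβ : 0 < β) (hβ1 : β < 1) (hγ : 0 < γ)
    (s : ℕ → ℝ) (hs : IsProfile P s) :
    (tminus P m μ β γ ≤ s 0 → rho P m μ β γ ≤ cost β γ m μ s (P - 1)) ∧
    (tminus P m μ β γ < s 0 → rho P m μ β γ < cost β γ m μ s (P - 1)) :=
  last_user_cost_bound_general P hP m μ β γ hβ hγ s
end

section
/- Let s be a time profile and let Δs > 0 be such that m/μ, t⁻ and every departure time s_k are integer multiples of Δs. If d_P − s_1 > m(P−1)/μ, then there exists a real t that is an integer multiple of Δs, with t ≠ s_k for all k ∈ {1,…,P}, such that the forecasted cost satisfies Ĉ(t | s) ≤ ρ. -/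
/-- The forecasted cost `Ĉ(t | s) = c`, as a relation (the cases are mutually exclusive
for `t` distinct from all departure times of the strictly increasing profile `s`). -/
def Forecast (P : ℕ) (β γ m μ : ℝ) (s : ℕ → ℝ) (t c : ℝ) : Prop :=
  (∃ k, k + 1 < P ∧ s k < t ∧ t < s (k + 1) ∧
      arr m μ s (k + 1) - arr m μ s k = m / μ ∧
      c = cost β γ m μ s k +
        (cost β γ m μ s (k + 1) - cost β γ m μ s k) / (s (k + 1) - s k) * (t - s k)) ∨
  (∃ k, k + 1 < P ∧ s k < t ∧ t < s (k + 1) ∧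
      m / μ < arr m μ s (k + 1) - arr m μ s k ∧
      ((t ≤ arr m μ s k ∧
          c = cost β γ m μ s k +
            (sdc β γ (arr m μ s k) - cost β γ m μ s k) / (arr m μ s k - s k) * (t - s k)) ∨
        (arr m μ s k < t ∧ c = sdc β γ t))) ∨
  (s (P - 1) < t ∧ t < arr m μ s (P - 1) ∧
      c = cost β γ m μ s (P - 1) +
        (sdc β γ (arr m μ s (P - 1)) - cost β γ m μ s (P - 1)) /
          (arr m μ s (P - 1) - s (P - 1)) * (t - s (P - 1))) ∨
  ((t < s 0 ∨ arr m μ s (P - 1) ≤ t) ∧ c = sdc β γ t)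


/-!
The schedule delay cost `V` is piecewise linear with `V(t⁻) = V(t⁺) = ρ`, so `V ≤ ρ` on
`[t⁻, t⁺]`, and `Ĉ(t | s) = V(t)` whenever `t` lies before `s₁`, after `d_P`, or in an idle
gap `(d_k, s_{k+1})` of the bottleneck. If `t⁻ < s₁` or `d_P < t⁺`, an endpoint of `[t⁻, t⁺]`
works. Otherwise arrivals are spaced exactly `m/μ` apart outside idle gaps, while
`d_P - s₁ > (P - 1)·m/μ = t⁺ - t⁻`; hence some idle gap has `d_k < t⁺` and `s_{k+1} > t⁻`.
Since `m/μ`, `t⁻`, `t⁺` and all `d_k` lie on the grid `Δs ℤ`, the grid point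
`max t⁻ (d_k + Δs)` lies in that gap and in `[t⁻, t⁺]`.
-/

open Set AddSubgroup

lemma mem_zmultiples_iff_exists_eq_mul {Δs x : ℝ} :
    x ∈ zmultiples Δs ↔ ∃ z : ℤ, x = z * Δs := by
  simp only [mem_zmultiples_iff, zsmul_eq_mul, eq_comm]

lemma add_le_of_lt_of_mem_zmultiples {Δs a b : ℝ} (hΔs : 0 < Δs)
    (ha : a ∈ zmultiples Δs) (hb : b ∈ zmultiples Δs) (hab : a < b) :
    a + Δs ≤ b := by
  obtain ⟨z, hz⟩ := mem_zmultiples_iff_exists_eq_mul.1 (sub_mem hb ha)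
  have hz1 : (1 : ℝ) ≤ z := by
    have : (0 : ℤ) < z := by
      have : (0 : ℝ) < z * Δs := by linarith
      exact_mod_cast pos_of_mul_pos_left this hΔs.le
    exact_mod_cast this
  nlinarith

section Arrivals

variable {m μ : ℝ} {s : ℕ → ℝ}

lemma le_arr (m μ : ℝ) (s : ℕ → ℝ) : ∀ k, s k ≤ arr m μ s k
  | 0 => le_rfl
  | _ + 1 => le_max_right _ _

lemma arr_add_le_arr_succ (m μ : ℝ) (s : ℕ → ℝ) (k : ℕ) :
    arr m μ s k + m / μ ≤ arr m μ s (k + 1) :=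
  le_max_left _ _

lemma arr_succ_eq_of_gap {k : ℕ} (hgap : m / μ < arr m μ s (k + 1) - arr m μ s k) :
    arr m μ s (k + 1) = s (k + 1) :=
  (max_choice _ _).resolve_left fun h => by
    have : arr m μ s (k + 1) = arr m μ s k + m / μ := h
    linarith

lemma arr_mem_of_forall_mem {G : AddSubgroup ℝ} {n : ℕ} (hg : m / μ ∈ G)
    (hs : ∀ k < n, s k ∈ G) : ∀ k < n, arr m μ s k ∈ G
  | 0, hk => hs 0 hk
  | k + 1, hk => by
    show max (arr m μ s k + m / μ) (s (k + 1)) ∈ G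
    rcases max_choice (arr m μ s k + m / μ) (s (k + 1)) with h | h <;> rw [h]
    exacts [add_mem (arr_mem_of_forall_mem hg hs k (by omega)) hg, hs _ hk]

lemma exists_gap_meeting_window (hg : 0 < m / μ) {a : ℝ} {n : ℕ} (hs0 : s 0 ≤ a)
    (hend : a + n * (m / μ) ≤ arr m μ s n) (hspread : s 0 + n * (m / μ) < arr m μ s n) :
    ∃ k < n, m / μ < arr m μ s (k + 1) - arr m μ s k ∧
      arr m μ s k < a + n * (m / μ) ∧ a < arr m μ s (k + 1) := by
  by_contra! hno
  -- A gap ending above `a` would have to start at `a + n·m/μ` or later, beyond both bounds.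
  have hbound : ∀ k ≤ n,
      arr m μ s k ≤ s 0 + k * (m / μ) ∨ arr m μ s k < a + k * (m / μ) := by
    intro k
    induction k with
    | zero => simp [arr]
    | succ k ih =>
      intro hk
      have hkn : (k : ℝ) * (m / μ) + m / μ ≤ n * (m / μ) := by
        rw [← add_one_mul]
        exact mul_le_mul_of_nonneg_right (by exact_mod_cast hk) hg.le
      have hstep := arr_add_le_arr_succ m μ s k
      push_cast
      by_cases hgap : m / μ < arr m μ s (k + 1) - arr m μ s k
      · have hlow := hno k hk hgap (by rcases ih (by omega) with h | h <;> linarith)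
        right
        linarith [mul_nonneg k.cast_nonneg hg.le]
      · rcases ih (by omega) with h | h
        · left; linarith
        · right; linarith
  rcases hbound n le_rfl with h | h <;> linarith

end Arrivals

lemma IsProfile.monotoneOn {P : ℕ} {s : ℕ → ℝ} (hs : IsProfile P s) : MonotoneOn s (Iio P) :=
  monotoneOn_of_le_add_one ordConnected_Iio fun k _ _ hk => (hs k hk).le

lemma IsProfile.forall_ne_of_between {P K : ℕ} {s : ℕ → ℝ} {t : ℝ} (hs : IsProfile P s)
    (hK : K + 1 < P) (hKt : s K < t) (htK : t < s (K + 1)) : ∀ k < P, t ≠ s k := by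
  intro k hk
  rcases le_or_gt k K with hkK | hKk
  · exact (hKt.trans_le' (hs.monotoneOn (by simp; omega) (by simp; omega) hkK)).ne'
  · exact (htK.trans_le (hs.monotoneOn (by simp; omega) (by simpa using hk) hKk)).ne

lemma tplus_eq_tminus_add {P : ℕ} (hP : 1 ≤ P) (m μ β γ : ℝ) :
    tplus P m μ β γ = tminus P m μ β γ + ((P - 1 : ℕ) : ℝ) * (m / μ) := by
  rw [tplus, Nat.cast_sub hP]
  ring

lemma sdc_le_rho_of_mem_Icc {P : ℕ} {m μ β γ x : ℝ} (hβ : 0 ≤ β) (hγ : 0 ≤ γ)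
    (hβγ : β + γ ≠ 0) (hx : x ∈ Icc (tminus P m μ β γ) (tplus P m μ β γ)) :
    sdc β γ x ≤ rho P m μ β γ := by
  have hleft : β * -tminus P m μ β γ = rho P m μ β γ := by
    unfold tminus rho; field_simp
  have hright : γ * tplus P m μ β γ = rho P m μ β γ := by
    unfold tplus tminus rho; field_simp; ring
  rcases le_total x 0 with hx0 | hx0
  · rw [sdc, max_eq_left (neg_nonneg.2 hx0), max_eq_right hx0, ← hleft]
    nlinarith [hx.1]
  · rw [sdc, max_eq_right (neg_nonpos.2 hx0), max_eq_left hx0, ← hright]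
    nlinarith [hx.2]

section Forecast

variable {P : ℕ} {β γ m μ : ℝ} {s : ℕ → ℝ} {t : ℝ}

lemma forecast_sdc_of_lt_first (ht : t < s 0) : Forecast P β γ m μ s t (sdc β γ t) :=
  .inr <| .inr <| .inr ⟨.inl ht, rfl⟩

lemma forecast_sdc_of_arr_last_le (ht : arr m μ s (P - 1) ≤ t) :
    Forecast P β γ m μ s t (sdc β γ t) :=
  .inr <| .inr <| .inr ⟨.inr ht, rfl⟩

lemma forecast_sdc_of_mem_gap {k : ℕ} (hk : k + 1 < P)
    (hgap : m / μ < arr m μ s (k + 1) - arr m μ s k) (h₁ : arr m μ s k < t)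
    (h₂ : t < s (k + 1)) : Forecast P β γ m μ s t (sdc β γ t) :=
  .inr <| .inl ⟨k, hk, (le_arr m μ s k).trans_lt h₁, h₂, hgap, .inr ⟨h₁, rfl⟩⟩

end Forecast

section FreeTime

variable {P : ℕ} {β γ m μ Δs a b : ℝ} {s : ℕ → ℝ}

lemma exists_grid_time_mem_gap (hΔs : 0 < Δs) (hΔs_le : Δs ≤ m / μ) (hs : IsProfile P s)
    {K : ℕ} (hK : K + 1 < P) (hgap : m / μ < arr m μ s (K + 1) - arr m μ s K)
    (hMK : arr m μ s K ∈ zmultiples Δs) (ha : a ∈ zmultiples Δs) (hb : b ∈ zmultiples Δs)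
    (hab : a ≤ b) (hKb : arr m μ s K < b) (haK : a < arr m μ s (K + 1)) :
    ∃ t ∈ zmultiples Δs, t ∈ Icc a b ∧ (∀ k < P, t ≠ s k) ∧
      Forecast P β γ m μ s t (sdc β γ t) := by
  have hsK := arr_succ_eq_of_gap hgap
  set t := max a (arr m μ s K + Δs)
  have hKt : arr m μ s K < t := (lt_add_of_pos_right _ hΔs).trans_le (le_max_right _ _)
  have htK : t < s (K + 1) := max_lt (hsK ▸ haK) (by rw [← hsK]; linarith)
  exact ⟨t, max_rec' (· ∈ zmultiples Δs) ha (add_mem hMK (mem_zmultiples Δs)),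
    ⟨le_max_left _ _, max_le hab (add_le_of_lt_of_mem_zmultiples hΔs hMK hb hKb)⟩,
    hs.forall_ne_of_between hK ((le_arr m μ s K).trans_lt hKt) htK,
    forecast_sdc_of_mem_gap hK hgap hKt htK⟩

lemma exists_free_grid_time (hP : 1 ≤ P) (hg : 0 < m / μ) (hΔs : 0 < Δs)
    (hgm : m / μ ∈ zmultiples Δs) (ha : a ∈ zmultiples Δs) (hs : IsProfile P s)
    (hgs : ∀ k < P, s k ∈ zmultiples Δs)
    (hspread : s 0 + ((P - 1 : ℕ) : ℝ) * (m / μ) < arr m μ s (P - 1)) :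
    ∃ t ∈ zmultiples Δs, t ∈ Icc a (a + ((P - 1 : ℕ) : ℝ) * (m / μ)) ∧ (∀ k < P, t ≠ s k) ∧
      Forecast P β γ m μ s t (sdc β γ t) := by
  set b := a + ((P - 1 : ℕ) : ℝ) * (m / μ)
  have hab : a ≤ b := le_add_of_nonneg_right (by positivity)
  have hb : b ∈ zmultiples Δs := by
    simpa only [b, nsmul_eq_mul] using add_mem ha (nsmul_mem hgm (P - 1))
  by_cases hfirst : a < s 0
  · exact ⟨a, ha, ⟨le_rfl, hab⟩, fun k hk => (hfirst.trans_le (hs.monotoneOn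
      (by simp; omega) (by simpa using hk) (Nat.zero_le k))).ne,
      forecast_sdc_of_lt_first hfirst⟩
  by_cases hlast : arr m μ s (P - 1) < b
  · exact ⟨b, hb, ⟨hab, le_rfl⟩, fun k hk => ((hs.monotoneOn (by simpa using hk)
      (by simp; omega) (by omega)).trans_lt ((le_arr m μ s _).trans_lt hlast)).ne',
      forecast_sdc_of_arr_last_le hlast.le⟩
  rw [not_lt] at hfirst hlast
  obtain ⟨K, hK, hgap, hKb, haK⟩ := exists_gap_meeting_window hg hfirst hlast hspread
  have hΔs_le : Δs ≤ m / μ := by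
    simpa using add_le_of_lt_of_mem_zmultiples hΔs (zero_mem _) hgm hg
  exact exists_grid_time_mem_gap hΔs hΔs_le hs (by omega) hgap
    (arr_mem_of_forall_mem hgm hgs K (by omega)) ha hb hab hKb haK

end FreeTime

theorem exists_cheap_forecast_time_general (P : ℕ) (hP : 2 ≤ P) (m μ β γ : ℝ)
    (hm : 0 < m) (hμ : 0 < μ)
    (hβ : 0 < β) (hγ : 0 < γ)
    (Δs : ℝ) (hΔs : 0 < Δs)
    (hgm : ∃ z : ℤ, m / μ = (z : ℝ) * Δs)
    (hgt : ∃ z : ℤ, tminus P m μ β γ = (z : ℝ) * Δs)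
    (s : ℕ → ℝ) (hs : IsProfile P s)
    (hgs : ∀ k, k < P → ∃ z : ℤ, s k = (z : ℝ) * Δs)
    (h : m * ((P : ℝ) - 1) / μ < arr m μ s (P - 1) - s 0) :
    ∃ t : ℝ, (∃ z : ℤ, t = (z : ℝ) * Δs) ∧ (∀ k, k < P → t ≠ s k) ∧
      ∃ c, Forecast P β γ m μ s t c ∧ c ≤ rho P m μ β γ := by
  simp_rw [← mem_zmultiples_iff_exists_eq_mul] at hgm hgt hgs ⊢
  have hP1 : 1 ≤ P := by omega
  have hspread : s 0 + ((P - 1 : ℕ) : ℝ) * (m / μ) < arr m μ s (P - 1) := by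
    rw [Nat.cast_sub hP1, Nat.cast_one, mul_div_assoc', mul_comm]; linarith
  obtain ⟨t, hMt, hwindow, hne, hforecast⟩ :=
    exists_free_grid_time (β := β) (γ := γ) hP1 (div_pos hm hμ) hΔs hgm hgt hs hgs hspread
  rw [← tplus_eq_tminus_add hP1] at hwindow
  exact ⟨t, hMt, hne, _, hforecast, sdc_le_rho_of_mem_Icc hβ.le hγ.le (by positivity) hwindow⟩

theorem exists_cheap_forecast_time (P : ℕ) (hP : 2 ≤ P) (m μ β γ : ℝ)
    (hm : 0 < m) (hm1 : m ≤ 1) (hμ : 0 < μ)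
    (hβ : 0 < β) (hβ1 : β < 1) (hγ : 0 < γ)
    (Δs : ℝ) (hΔs : 0 < Δs)
    (hgm : ∃ z : ℤ, m / μ = (z : ℝ) * Δs)
    (hgt : ∃ z : ℤ, tminus P m μ β γ = (z : ℝ) * Δs)
    (s : ℕ → ℝ) (hs : IsProfile P s)
    (hgs : ∀ k, k < P → ∃ z : ℤ, s k = (z : ℝ) * Δs)
    (h : m * ((P : ℝ) - 1) / μ < arr m μ s (P - 1) - s 0) :
    ∃ t : ℝ, (∃ z : ℤ, t = (z : ℝ) * Δs) ∧ (∀ k, k < P → t ≠ s k) ∧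
      ∃ c, Forecast P β γ m μ s t c ∧ c ≤ rho P m μ β γ :=
  exists_cheap_forecast_time_general P hP m μ β γ hm hμ hβ hγ Δs hΔs hgm hgt s hs hgs h
end
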